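/- arXiv:2602.18926 — 2 statements merged into one kernel-verified Lean document; each statement's English description precedes it below -/
import Mathlib

section
/- Let C be a chain complex over a coefficient field k₀ = F_p, and suppose (x_n)_{n≥1} is a sequence of cycles in a differential graded coalgebra (C, δ, Δ) such that the reduced coproduct satisfies Δ̄ x_n = Σ_{n₁+n₂=n, n₁,n₂≥1} x_{n₁} ⊗ x_{n₂} in homology, and the homology class of x₁ is nonzero. Then by induction the homology class of x_n is nonzero for all n ≥ 1. -/
/-!
If `[x_n] = 0` for some `n ≥ 2`, then `Σ_{i+j=n} [x_i] ⊗ [x_j] = 0`. Projecting the left tensor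
factor onto the graded piece `G 1` kills every term except `[x_1] ⊗ [x_{n-1}]`, and since
`[x_1] ≠ 0` this forces `[x_{n-1}] = 0`; strong induction on `n` finishes the argument.
-/

open TensorProduct

theorem TensorProduct.eq_zero_of_tmul_eq_zero_of_ne_zero {K M N : Type*} [Semifield K]
    [AddCommMonoid M] [Module K M] [Module.Projective K M] [AddCommMonoid N] [Module K N]
    {a : M} {b : N} (h : a ⊗ₜ[K] b = 0) (ha : a ≠ 0) : b = 0 := by
  obtain ⟨f, hf⟩ := Module.Projective.exists_dual_eq_one K ha
  simpa [hf] using congrArg (fun t => TensorProduct.lid K N (LinearMap.rTensor N f t)) h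

theorem iSupIndep.exists_projection {K V ι : Type*} [DivisionRing K] [AddCommGroup V]
    [Module K V] {G : ι → Submodule K V} (hG : iSupIndep G) (i : ι) :
    ∃ π : V →ₗ[K] V, (∀ v ∈ G i, π v = v) ∧ ∀ j ≠ i, ∀ v ∈ G j, π v = 0 := by
  obtain ⟨c, hc, hcompl⟩ := (hG i).symm.exists_isCompl
  refine ⟨(G i).projection c hcompl.symm, fun v hv => ?_, fun j hj v hv => ?_⟩
  · exact Submodule.projection_apply_of_mem_left _ hv
  · exact (Submodule.projection_apply_eq_zero_iff _).2
      (hc (Submodule.mem_iSup_of_mem j (Submodule.mem_iSup_of_mem hj hv)))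

theorem iSupIndep.eq_zero_of_sum_tmul_eq_zero {K V W ι : Type*} [Field K]
    [AddCommGroup V] [Module K V] [AddCommGroup W] [Module K W] {G : ι → Submodule K V}
    (hG : iSupIndep G) {s : Finset ι} {i : ι} (hi : i ∈ s) {a : ι → V} {b : ι → W}
    (ha : ∀ j ∈ s, a j ∈ G j) (hai : a i ≠ 0) (h : ∑ j ∈ s, a j ⊗ₜ[K] b j = 0) :
    b i = 0 := by
  obtain ⟨π, hπi, hπ⟩ := hG.exists_projection i
  have hterm : ∀ j ∈ s, j ≠ i → π (a j) ⊗ₜ[K] b j = 0 := fun j hj hji => by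
    rw [hπ j hji _ (ha j hj), zero_tmul]
  have hproj := congrArg (LinearMap.rTensor W π) h
  rw [map_sum, map_zero] at hproj
  simp only [LinearMap.rTensor_tmul] at hproj
  rw [Finset.sum_eq_single_of_mem i hi hterm, hπi _ (ha i hi)] at hproj
  exact eq_zero_of_tmul_eq_zero_of_ne_zero hproj hai

theorem ne_zero_of_comul_eq_sum_tmul {K H : Type*} [Field K] [AddCommGroup H] [Module K H]
    {G : ℕ → Submodule K H} (hG : iSupIndep G) (Δ : H →ₗ[K] H ⊗[K] H) {a : ℕ → H}
    (haG : ∀ n, 1 ≤ n → a n ∈ G n)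
    (hΔ : ∀ n, 1 ≤ n → Δ (a n) = ∑ i ∈ Finset.Ioo 0 n, a i ⊗ₜ[K] a (n - i))
    (h1 : a 1 ≠ 0) : ∀ n, 1 ≤ n → a n ≠ 0 := by
  intro n
  induction n using Nat.strong_induction_on with
  | _ n ih =>
    intro hn hzero
    obtain rfl | h2 := eq_or_lt_of_le hn
    · exact h1 hzero
    have hsum : ∑ i ∈ Finset.Ioo 0 n, a i ⊗ₜ[K] a (n - i) = 0 := by
      rw [← hΔ n hn, hzero, map_zero]
    refine ih (n - 1) (by omega) (by omega)
      (hG.eq_zero_of_sum_tmul_eq_zero (b := fun i => a (n - i)) ?_ ?_ h1 hsum)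
    · simp only [Finset.mem_Ioo]
      omega
    · exact fun j hj => haG j (Finset.mem_Ioo.1 hj).1

theorem stmt4_general (p : ℕ) [Fact p.Prime] {C H : Type}
    [AddCommGroup C] [Module (ZMod p) C] [AddCommGroup H] [Module (ZMod p) H]
    (d : C →ₗ[ZMod p] C)
    (cls : LinearMap.ker d →ₗ[ZMod p] H)
    (hcls : ∀ z : LinearMap.ker d, cls z = 0 ↔ (z : C) ∈ LinearMap.range d)
    (G : ℕ → Submodule (ZMod p) H) (hG : iSupIndep G)
    (Δ : H →ₗ[ZMod p] H ⊗[ZMod p] H)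
    (x : ℕ → LinearMap.ker d)
    (hxG : ∀ n, 1 ≤ n → cls (x n) ∈ G n)
    (hΔ : ∀ n, 1 ≤ n →
      Δ (cls (x n)) = ∑ i ∈ Finset.Ioo 0 n, cls (x i) ⊗ₜ[ZMod p] cls (x (n - i)))
    (h1 : ¬ ((x 1 : C) ∈ LinearMap.range d)) :
    ∀ n, 1 ≤ n → ¬ ((x n : C) ∈ LinearMap.range d) := by
  have hcls1 : cls (x 1) ≠ 0 := fun h => h1 ((hcls (x 1)).1 h)
  intro n hn hmem
  exact ne_zero_of_comul_eq_sum_tmul hG Δ hxG hΔ hcls1 n hn ((hcls (x n)).2 hmem)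

theorem stmt4 (p : ℕ) [Fact p.Prime] {C H : Type}
    [AddCommGroup C] [Module (ZMod p) C] [AddCommGroup H] [Module (ZMod p) H]
    (d : C →ₗ[ZMod p] C) (hd2 : ∀ x, d (d x) = 0)
    (cls : LinearMap.ker d →ₗ[ZMod p] H)
    (hcls : ∀ z : LinearMap.ker d, cls z = 0 ↔ (z : C) ∈ LinearMap.range d)
    (G : ℕ → Submodule (ZMod p) H) (hG : iSupIndep G)
    (Δ : H →ₗ[ZMod p] H ⊗[ZMod p] H)
    (x : ℕ → LinearMap.ker d)
    (hxG : ∀ n, 1 ≤ n → cls (x n) ∈ G n)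
    (hΔ : ∀ n, 1 ≤ n →
      Δ (cls (x n)) = ∑ i ∈ Finset.Ioo 0 n, cls (x i) ⊗ₜ[ZMod p] cls (x (n - i)))
    (h1 : ¬ ((x 1 : C) ∈ LinearMap.range d)) :
    ∀ n, 1 ≤ n → ¬ ((x n : C) ∈ LinearMap.range d) :=
  stmt4_general p d cls hcls G hG Δ x hxG hΔ h1
end

section
/- Let (Â, d) be a DG ring over ℤ equipped with a ℤ-bilinear cup-one product ⌣₁ satisfying the Hirsch identities. Let (â_n)_{n≥1} be a sequence of odd-degree elements with d â_n = Σ_{i=1}^{n-1} â_i â_{n-i} + ζ̂_n where each ζ̂_n ∈ pÂ, and suppose b̂₁ has even degree with d b̂₁ = p^ε â' for some ε ≥ 1. Define b̂_{n+1} = â_n ⌣₁ b̂₁ for n ≥ 1. Then for every n ≥ 1, d b̂_{n+1} = Σ_{i=1}^{n} (â_i b̂_{n+1-i} − b̂_i â_{n+1-i}) + p ẑ_{n+1} for some ẑ_{n+1} ∈ Â (more precisely the error term lies in the subgroup generated by ζ̂_n ⌣₁ b̂₁ and p^ε â_n ⌣₁ â'). -/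
/-!
STATEMENT 6: In an integral DG ring with ℤ-bilinear cup-one product satisfying the
Hirsch identities, given an "approximate Kraines sequence" `â_n` of odd degree
(`d â_n = Σ â_i â_{n-i} + ζ̂_n`, `ζ̂_n ∈ pÂ`) and an even-degree `b̂₁` with
`d b̂₁ = p^ε â'`, the elements `b̂_{n+1} = â_n ⌣₁ b̂₁` satisfy
`d b̂_{n+1} = Σ_{i=1}^n (â_i b̂_{n+1-i} − b̂_i â_{n+1-i}) + ẑ` with error `ẑ` divisible
by `p`, lying in the subgroup generated by `ζ̂_n ⌣₁ b̂₁` and `p^ε (â_n ⌣₁ â')`.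
-/

private lemma stmt6_shift {M : Type*} [AddCommMonoid M] (m : ℕ) (g : ℕ → M) :
    ∑ i ∈ Finset.Icc 2 (m + 1), g i = ∑ j ∈ Finset.Icc 1 m, g (j + 1) := by
  refine Finset.sum_nbij' (fun i => i - 1) (fun j => j + 1) ?_ ?_ ?_ ?_ ?_ <;>
    intros a ha <;> simp_all <;> first | omega | (congr 1 <;> omega)


theorem stmt6 {Ahat : Type} [Ring Ahat]
    (p : ℕ) (hp : p.Prime) (ε : ℕ) (hε : 1 ≤ ε)
    (𝒜 : ℤ → AddSubgroup Ahat)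
    (d : Ahat →+ Ahat) (hd2 : ∀ x, d (d x) = 0)
    (hddeg : ∀ (i : ℤ) (x : Ahat), x ∈ 𝒜 i → d x ∈ 𝒜 (i + 1))
    (hmuldeg : ∀ (i j : ℤ) (x y : Ahat), x ∈ 𝒜 i → y ∈ 𝒜 j → x * y ∈ 𝒜 (i + j))
    (cup1 : Ahat →+ Ahat →+ Ahat)
    (hcupdeg : ∀ (i j : ℤ) (x y : Ahat), x ∈ 𝒜 i → y ∈ 𝒜 j → cup1 x y ∈ 𝒜 (i + j - 1))
    (hHirsch1 : ∀ (i j : ℤ) (x y : Ahat), x ∈ 𝒜 i → y ∈ 𝒜 j →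
      d (cup1 x y) = x * y - ((Int.negOnePow (i * j) : ℤˣ) : ℤ) • (y * x)
        - cup1 (d x) y - ((Int.negOnePow i : ℤˣ) : ℤ) • cup1 x (d y))
    (hHirsch2 : ∀ (i j l : ℤ) (x y z : Ahat), x ∈ 𝒜 i → y ∈ 𝒜 j → z ∈ 𝒜 l →
      cup1 (x * y) z = ((Int.negOnePow i : ℤˣ) : ℤ) • (x * cup1 y z)
        + ((Int.negOnePow (j * l) : ℤˣ) : ℤ) • (cup1 x z * y))
    (ahat : ℕ → Ahat) (degA : ℕ → ℤ)
    (hamem : ∀ n, 1 ≤ n → ahat n ∈ 𝒜 (degA n)) (hodd : ∀ n, 1 ≤ n → Odd (degA n))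
    (ζ : ℕ → Ahat) (hζ : ∀ n, 1 ≤ n → ∃ y : Ahat, ζ n = (p : ℤ) • y)
    (hda : ∀ n, 1 ≤ n → d (ahat n) = (∑ i ∈ Finset.Ioo 0 n, ahat i * ahat (n - i)) + ζ n)
    (b1 a' : Ahat) (e : ℤ) (he : Even e) (hb1 : b1 ∈ 𝒜 e)
    (hdb1 : d b1 = ((p : ℤ) ^ ε) • a')
    (b : ℕ → Ahat) (hb1def : b 1 = b1)
    (hbdef : ∀ n, 1 ≤ n → b (n + 1) = cup1 (ahat n) b1) :
    ∀ n, 1 ≤ n → ∃ z : Ahat,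
      z ∈ AddSubgroup.closure ({cup1 (ζ n) b1, ((p : ℤ) ^ ε) • cup1 (ahat n) a'} : Set Ahat) ∧
      (∃ w : Ahat, z = (p : ℤ) • w) ∧
      d (b (n + 1)) =
        (∑ i ∈ Finset.Icc 1 n, (ahat i * b (n + 1 - i) - b i * ahat (n + 1 - i))) + z := by
  intro n hn
  obtain ⟨m, rfl⟩ : ∃ m, n = m + 1 := ⟨n - 1, by omega⟩
  obtain ⟨y, hy⟩ := hζ (m + 1) (by omega)
  refine ⟨((p : ℤ) ^ ε) • cup1 (ahat (m + 1)) a' - cup1 (ζ (m + 1)) b1, ?_, ?_, ?_⟩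
  · exact AddSubgroup.sub_mem _ (AddSubgroup.subset_closure (by simp))
      (AddSubgroup.subset_closure (by simp))
  · obtain ⟨k, rfl⟩ : ∃ k, ε = k + 1 := ⟨ε - 1, by omega⟩
    refine ⟨(p : ℤ) ^ k • cup1 (ahat (m + 1)) a' - cup1 y b1, ?_⟩
    rw [hy, smul_sub, ← smul_assoc, smul_eq_mul, ← pow_succ']
    congr 1
    rw [map_zsmul]
    simp
  · -- sign lemmas
    have hse : ∀ k : ℤ, ((Int.negOnePow (k * e) : ℤˣ) : ℤ) = 1 := fun k => by
      rw [Int.negOnePow_even _ (he.mul_left k)]; rfl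
    have hso : ∀ k : ℕ, 1 ≤ k → ((Int.negOnePow (degA k) : ℤˣ) : ℤ) = -1 := fun k hk => by
      rw [Int.negOnePow_odd _ (hodd k hk)]; rfl
    -- compute d (b (m+2))
    have hmain : d (b (m + 1 + 1)) =
        ahat (m + 1) * b1 - b1 * ahat (m + 1)
          - cup1 (d (ahat (m + 1))) b1 + ((p : ℤ) ^ ε) • cup1 (ahat (m + 1)) a' := by
      rw [hbdef (m + 1) (by omega),
        hHirsch1 (degA (m + 1)) e _ _ (hamem _ (by omega)) hb1, hse, hso _ (by omega), hdb1,
        map_zsmul]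
      simp only [one_smul, neg_one_smul, AddMonoidHom.smul_apply]
      abel
    rw [hmain, hda (m + 1) (by omega), map_add]
    have hsum : (cup1 (∑ i ∈ Finset.Ioo 0 (m + 1), ahat i * ahat (m + 1 - i))) b1
        = ∑ i ∈ Finset.Ioo 0 (m + 1),
            (cup1 (ahat i) b1 * ahat (m + 1 - i) - ahat i * cup1 (ahat (m + 1 - i)) b1) := by
      rw [map_sum, AddMonoidHom.finset_sum_apply]
      refine Finset.sum_congr rfl fun i hi => ?_
      simp only [Finset.mem_Ioo] at hi
      rw [hHirsch2 (degA i) (degA (m + 1 - i)) e _ _ _ (hamem _ (by omega))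
        (hamem _ (by omega)) hb1, hse, hso _ (by omega)]
      module
    rw [AddMonoidHom.add_apply, hsum]
    -- the target sum
    have key : ∑ i ∈ Finset.Icc 1 (m + 1), (ahat i * b (m + 1 + 1 - i) - b i * ahat (m + 1 + 1 - i))
        = (∑ i ∈ Finset.Ioo 0 (m + 1),
            (ahat i * cup1 (ahat (m + 1 - i)) b1 - cup1 (ahat i) b1 * ahat (m + 1 - i)))
          + (ahat (m + 1) * b1 - b1 * ahat (m + 1)) := by
      have hIoo : Finset.Ioo 0 (m + 1) = Finset.Icc 1 m := by
        ext i; simp; omega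
      rw [Finset.sum_sub_distrib]
      have h1 : ∑ i ∈ Finset.Icc 1 (m + 1), ahat i * b (m + 1 + 1 - i)
          = (∑ i ∈ Finset.Icc 1 m, ahat i * cup1 (ahat (m + 1 - i)) b1) + ahat (m + 1) * b1 := by
        rw [Finset.sum_Icc_succ_top (by omega)]
        congr 1
        · refine Finset.sum_congr rfl fun i hi => ?_
          simp only [Finset.mem_Icc] at hi
          have : m + 1 + 1 - i = (m + 1 - i) + 1 := by omega
          rw [this, hbdef (m + 1 - i) (by omega)]
        · simp [hb1def]
      have h2 : ∑ i ∈ Finset.Icc 1 (m + 1), b i * ahat (m + 1 + 1 - i)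
          = b1 * ahat (m + 1) + ∑ i ∈ Finset.Icc 1 m, cup1 (ahat i) b1 * ahat (m + 1 - i) := by
        have hins : Finset.Icc 1 (m + 1) = insert 1 (Finset.Icc 2 (m + 1)) := by
          ext i; simp; omega
        rw [hins, Finset.sum_insert (by simp)]
        congr 1
        · simp [hb1def]
        · rw [stmt6_shift m (fun i => b i * ahat (m + 1 + 1 - i))]
          refine Finset.sum_congr rfl fun j hj => ?_
          simp only [Finset.mem_Icc] at hj
          rw [hbdef j (by omega)]
          congr 2
          omega
      rw [h1, h2, hIoo, Finset.sum_sub_distrib]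
      abel
    rw [key]
    simp only [Finset.sum_sub_distrib]
    abel
end
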